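/- Let X be a group and A an infinite generating set for X. If the sphere S_A(h) = {x ∈ X : ℓ_A(x) = h} is finite for some positive integer h, then S_A(k) = ∅ for all k > h. -/

import Mathlib

noncomputable def wordLength {X : Type*} [Group X] (A : Set X) (x : X) : ℕ :=
  sInf {k | ∃ l : List X, l.length = k ∧ (∀ a ∈ l, a ∈ A ∪ A⁻¹) ∧ l.prod = x}

/-!
Splitting a geodesic word shows that every element of `S(n + 1)` is `p * c` with `p ∈ S(n)`,
`c ∈ S(1)`. For fixed `p = c₁ * u ∈ S(n)` with `c₁ ∈ S(1)`, `u ∈ S(n - 1)`, the condition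
`p * c ∈ S(n + 1)` forces `u * c ∈ S(n)`; so when `n ≥ 1` and `S(n)` is finite, only finitely many
`c` occur and `S(n + 1)` is finite. Hence all spheres of radius `≥ h` are finite. But an element `p`
of `S(k)` with `k > h` would send the infinite set `A` injectively, via `b ↦ p * b`, into
`S(k - 1) ∪ S(k) ∪ S(k + 1)`.
-/

section

variable {X : Type*} [Group X] {A : Set X}

def wordSphere (A : Set X) (n : ℕ) : Set X := {x | wordLength A x = n}

lemma wordLength_prod_le_length {l : List X} (hl : ∀ a ∈ l, a ∈ A ∪ A⁻¹) :
    wordLength A l.prod ≤ l.length :=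
  Nat.sInf_le ⟨l, rfl, hl, rfl⟩

lemma wordLength_le_one {b : X} (hb : b ∈ A ∪ A⁻¹) : wordLength A b ≤ 1 := by
  simpa using wordLength_prod_le_length (l := [b]) (by simpa using hb)

lemma exists_geodesic_list (hA : Subgroup.closure A = ⊤) (x : X) :
    ∃ l : List X, l.length = wordLength A x ∧ (∀ a ∈ l, a ∈ A ∪ A⁻¹) ∧ l.prod = x := by
  have hx : x ∈ Submonoid.closure (A ∪ A⁻¹) := by
    rw [← Subgroup.closure_toSubmonoid, hA]; trivial
  obtain ⟨l, hl, rfl⟩ := Submonoid.exists_list_of_mem_closure hx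
  exact Nat.sInf_mem (s := {k | ∃ l' : List X, l'.length = k ∧ (∀ a ∈ l', a ∈ A ∪ A⁻¹) ∧
    l'.prod = l.prod}) ⟨l.length, l, rfl, hl, rfl⟩

lemma wordLength_mul_le (hA : Subgroup.closure A = ⊤) (x y : X) :
    wordLength A (x * y) ≤ wordLength A x + wordLength A y := by
  obtain ⟨l₁, hlen₁, hl₁, rfl⟩ := exists_geodesic_list hA x
  obtain ⟨l₂, hlen₂, hl₂, rfl⟩ := exists_geodesic_list hA y
  calc wordLength A (l₁.prod * l₂.prod) = wordLength A (l₁ ++ l₂).prod := by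
        rw [List.prod_append]
    _ ≤ (l₁ ++ l₂).length := wordLength_prod_le_length fun a ha =>
        (List.mem_append.mp ha).elim (hl₁ a) (hl₂ a)
    _ = _ := by rw [List.length_append, hlen₁, hlen₂]

lemma wordLength_le_mul_add (hA : Subgroup.closure A = ⊤) (x y : X) :
    wordLength A x ≤ wordLength A (x * y) + wordLength A y⁻¹ := by
  simpa using wordLength_mul_le hA (x * y) y⁻¹

lemma exists_eq_mul_of_wordLength_eq_add (hA : Subgroup.closure A = ⊤) {x : X} {m n : ℕ}
    (hx : wordLength A x = m + n) :
    ∃ y z, wordLength A y = m ∧ wordLength A z = n ∧ x = y * z := by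
  obtain ⟨l, hlen, hl, rfl⟩ := exists_geodesic_list hA x
  have hy : wordLength A (l.take m).prod ≤ (l.take m).length :=
    wordLength_prod_le_length fun a ha => hl a (List.mem_of_mem_take ha)
  have hz : wordLength A (l.drop m).prod ≤ (l.drop m).length :=
    wordLength_prod_le_length fun a ha => hl a (List.mem_of_mem_drop ha)
  have hsplit : l.prod = (l.take m).prod * (l.drop m).prod := by
    rw [← List.prod_append, List.take_append_drop]
  have hsub := hsplit ▸ wordLength_mul_le hA (l.take m).prod (l.drop m).prod
  rw [List.length_take] at hy
  rw [List.length_drop] at hz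
  exact ⟨_, _, by omega, by omega, hsplit⟩

lemma wordSphere_succ_finite (hA : Subgroup.closure A = ⊤) {n : ℕ} (hn : 0 < n)
    (hfin : (wordSphere A n).Finite) : (wordSphere A (n + 1)).Finite := by
  have hfiber : ∀ p ∈ wordSphere A n,
      {c | c ∈ wordSphere A 1 ∧ wordLength A (p * c) = n + 1}.Finite := by
    intro p hp
    obtain ⟨c₁, u, hc₁, hu, rfl⟩ :=
      exists_eq_mul_of_wordLength_eq_add hA (m := 1) (n := n - 1) (x := p) (by rw [hp]; omega)
    refine (hfin.preimage (mul_right_injective u).injOn).subset ?_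
    rintro c ⟨hc, hpc⟩
    have hle := wordLength_mul_le hA u c
    have hge := wordLength_mul_le hA c₁ (u * c)
    rw [← mul_assoc, hpc] at hge
    simp only [wordSphere, Set.mem_ofPred_eq, Set.mem_preimage] at hc ⊢
    omega
  refine (hfin.biUnion fun p hp => (hfiber p hp).image (p * ·)).subset ?_
  intro x hx
  obtain ⟨p, c, hp, hc, rfl⟩ := exists_eq_mul_of_wordLength_eq_add hA (m := n) (n := 1) hx
  exact Set.mem_biUnion hp ⟨c, ⟨hc, hx⟩, rfl⟩

lemma wordSphere_finite_of_le (hA : Subgroup.closure A = ⊤) {h : ℕ} (hh : 0 < h)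
    (hfin : (wordSphere A h).Finite) {n : ℕ} (hn : h ≤ n) : (wordSphere A n).Finite := by
  induction n, hn using Nat.le_induction with
  | base => exact hfin
  | succ n _ ih => exact wordSphere_succ_finite hA (by omega) ih

lemma infinite_wordSphere_union_of_nonempty (hA : Subgroup.closure A = ⊤) (hAinf : A.Infinite)
    {k : ℕ} (hk : (wordSphere A (k + 1)).Nonempty) :
    (wordSphere A k ∪ wordSphere A (k + 1) ∪ wordSphere A (k + 2)).Infinite := by
  obtain ⟨p, hp⟩ := hk
  refine (hAinf.image (mul_right_injective p).injOn).mono ?_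
  rintro _ ⟨b, hb, rfl⟩
  have hle := wordLength_mul_le hA p b
  have hge := wordLength_le_mul_add hA p b
  have hb₁ := wordLength_le_one (A := A) (Or.inl hb)
  have hb₂ := wordLength_le_one (A := A) (Or.inr (Set.inv_mem_inv.mpr hb))
  simp only [wordSphere, Set.mem_union, Set.mem_ofPred_eq] at hp ⊢
  omega

end

/-- If `A` is an infinite generating set of `X` and the sphere `S_A(h)` is finite for
some positive integer `h`, then `S_A(k) = ∅` for all `k > h`. -/
theorem sphere_empty_of_sphere_finite {X : Type*} [Group X] (A : Set X)
    (hA : Subgroup.closure A = ⊤) (hAinf : A.Infinite)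
    (h : ℕ) (hh : 0 < h) (hfin : {x : X | wordLength A x = h}.Finite) :
    ∀ k : ℕ, h < k → {x : X | wordLength A x = k} = ∅ := by
  intro k hk
  obtain ⟨j, rfl⟩ : ∃ j, k = j + 1 := ⟨k - 1, by omega⟩
  have hfin' : ∀ n, h ≤ n → (wordSphere A n).Finite :=
    fun n hn => wordSphere_finite_of_le hA hh hfin hn
  by_contra hne
  exact infinite_wordSphere_union_of_nonempty hA hAinf (Set.nonempty_iff_ne_empty.mpr hne)
    (((hfin' j (by omega)).union (hfin' (j + 1) (by omega))).union (hfin' (j + 2) (by omega)))
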